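/- arXiv:2006.16076 — 2 statements merged into one kernel-verified Lean document; each statement's English description precedes it below -/
import Mathlib

section
/- Let n ≥ 2 and let L be the n×n matrix over 𝔽₂ whose first column has all entries equal to 1, with L[i][i+1] = 1 for 0 ≤ i ≤ n−2 and all other entries 0. Then the characteristic polynomial of L equals xⁿ + xⁿ⁻¹ + ⋯ + x + 1 = ∑_{j=0}^{n} xʲ. -/
/-!
Expanding `det (X • 1 - L)` along its last row leaves two minors: the characteristic matrix of the
same kind of matrix one size smaller, and a lower triangular matrix with `-1` on the diagonal.
Hence the characteristic polynomial `χ_c` of the matrix with first column `c` and ones on the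
superdiagonal satisfies `χ_c = X * χ_{c'} - c_{n-1}`, which solves to `Xⁿ - ∑ cᵢ X^(n-1-i)`.
Over `𝔽₂` with every `cᵢ = 1` this is `∑_{j ≤ n} Xʲ`.
-/

open Matrix Polynomial

namespace Matrix

variable {R : Type*} [CommRing R]

theorem charmatrix_submatrix {m n : Type*} [Fintype m] [DecidableEq m] [Fintype n] [DecidableEq n]
    (M : Matrix n n R) {f : m → n} (hf : Function.Injective f) :
    (charmatrix M).submatrix f f = charmatrix (M.submatrix f f) := by
  ext i j : 1
  rcases eq_or_ne i j with rfl | h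
  · simp
  · simp [h, hf.ne h]

variable {n : ℕ}

def firstColCompanion (c : Fin n → R) : Matrix (Fin n) (Fin n) R :=
  of fun i j => if (j : ℕ) = 0 then c i else if (i : ℕ) + 1 = j then 1 else 0

theorem firstColCompanion_submatrix_castSucc (c : Fin (n + 1) → R) :
    (firstColCompanion c).submatrix Fin.castSucc Fin.castSucc =
      firstColCompanion (c ∘ Fin.castSucc) := by
  ext i j
  simp only [submatrix_apply, firstColCompanion, of_apply, Fin.val_castSucc, Function.comp_apply]

theorem det_charmatrix_firstColCompanion_submatrix_castSucc_succ (c : Fin (n + 1) → R) :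
    ((charmatrix (firstColCompanion c)).submatrix Fin.castSucc Fin.succ).det = (-1) ^ n := by
  have hentry : ∀ a b : Fin n,
      (charmatrix (firstColCompanion c)).submatrix Fin.castSucc Fin.succ a b =
        (if (a : ℕ) = b + 1 then X else 0) - if a = b then 1 else 0 := by
    intro a b
    simp only [submatrix_apply, charmatrix_apply, diagonal_apply, firstColCompanion, of_apply,
      Fin.ext_iff, Fin.val_castSucc, Fin.val_succ, Nat.add_one_ne_zero, if_false,
      Nat.add_right_cancel_iff]
    split_ifs <;> simp
  rw [det_of_isLowerTriangular _ fun a b (hab : a < b) => ?_]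
  · simp only [hentry]
    simp
  · rw [hentry, if_neg (by omega), if_neg hab.ne, sub_zero]

theorem charpoly_firstColCompanion_succ (c : Fin (n + 1) → R) :
    (firstColCompanion c).charpoly =
      X * (firstColCompanion (c ∘ Fin.castSucc)).charpoly - C (c (Fin.last n)) := by
  have hrow : ∀ j, charmatrix (firstColCompanion c) (Fin.last n) j =
      (if j = Fin.last n then X else 0) - if j = 0 then C (c (Fin.last n)) else 0 := by
    intro j
    simp only [charmatrix_apply, diagonal_apply, firstColCompanion, of_apply, Fin.ext_iff,
      Fin.val_last, Fin.val_zero, eq_comm (a := n)]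
    have := j.isLt
    split_ifs <;> first | omega | simp
  rw [charpoly, det_succ_row _ (Fin.last n)]
  simp only [hrow, sub_mul, mul_sub, Finset.sum_sub_distrib, mul_ite, ite_mul, mul_zero, zero_mul,
    Finset.sum_ite_eq', Finset.mem_univ, if_true]
  rw [Fin.succAbove_last, charmatrix_submatrix _ (Fin.castSucc_injective n),
    firstColCompanion_submatrix_castSucc, Fin.succAbove_zero,
    det_charmatrix_firstColCompanion_submatrix_castSucc_succ, charpoly]
  simp only [Fin.val_last, Fin.val_zero, add_zero, ← two_mul, pow_mul, neg_one_sq, one_pow,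
    one_mul, mul_right_comm _ (C _), ← mul_pow, neg_one_mul, neg_neg]

theorem charpoly_firstColCompanion (c : Fin n → R) :
    (firstColCompanion c).charpoly = X ^ n - ∑ i, C (c i) * X ^ (i.rev : ℕ) := by
  induction n with
  | zero => simp [charpoly]
  | succ n ih =>
    rw [charpoly_firstColCompanion_succ, ih, Fin.sum_univ_castSucc]
    simp only [Function.comp_apply, Fin.rev_castSucc, Fin.val_succ, Fin.rev_last, Fin.val_zero,
      pow_succ', pow_zero, mul_one, mul_sub, Finset.mul_sum, mul_left_comm X]
    ring

end Matrix

theorem stmt1_general (n : ℕ)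
    (L : Matrix (Fin n) (Fin n) (ZMod 2))
    (hL : ∀ i j : Fin n, L i j =
      if (j : ℕ) = 0 then 1
      else if (i : ℕ) + 1 = (j : ℕ) then 1 else 0) :
    L.charpoly = ∑ j ∈ Finset.range (n + 1), (X : (ZMod 2)[X]) ^ j := by
  have hL_eq : L = firstColCompanion fun _ => 1 := by
    ext i j
    exact hL i j
  rw [hL_eq, charpoly_firstColCompanion, Finset.sum_range_succ, CharTwo.sub_eq_add, add_comm]
  simp only [map_one, one_mul]
  rw [Fintype.sum_equiv Fin.revPerm (fun i => (X : (ZMod 2)[X]) ^ (i.rev : ℕ))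
      (fun i => X ^ (i : ℕ)) fun _ => rfl,
    Fin.sum_univ_eq_sum_range (fun j => (X : (ZMod 2)[X]) ^ j)]

theorem stmt1 (n : ℕ) (hn : 2 ≤ n)
    (L : Matrix (Fin n) (Fin n) (ZMod 2))
    (hL : ∀ i j : Fin n, L i j =
      if (j : ℕ) = 0 then 1
      else if (i : ℕ) + 1 = (j : ℕ) then 1 else 0) :
    L.charpoly = ∑ j ∈ Finset.range (n + 1), (X : (ZMod 2)[X]) ^ j :=
  stmt1_general n L hL
end

section
/- Let f ∈ ℚ[x] be a monic irreducible polynomial of degree n ≥ 2. Then f satisfies the property that for every root α of f in ℂ, αⁿ is also a root of f, if and only if f is the d-th cyclotomic polynomial Φ_d for some d ≥ 3 with gcd(n, d) = 1. -/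
open Polynomial

theorem stmt4 (f : ℚ[X]) (hmonic : f.Monic) (hirr : Irreducible f)
    (n : ℕ) (hdeg : f.natDegree = n) (hn : 2 ≤ n) :
    (∀ α : ℂ, aeval α f = 0 → aeval (α ^ n) f = 0) ↔
      ∃ d : ℕ, 3 ≤ d ∧ Nat.gcd n d = 1 ∧ f = cyclotomic d ℚ := by
  have hf0 : f ≠ 0 := hmonic.ne_zero
  constructor
  · intro h
    -- pick a root α of f in ℂ
    have hdegpos : 0 < f.natDegree := by omega
    obtain ⟨α, hα⟩ : ∃ α : ℂ, aeval α f = 0 := by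
      have hdm : 0 < (f.map (algebraMap ℚ ℂ)).degree := by
        rw [degree_map, degree_eq_natDegree hf0]
        exact_mod_cast hdegpos
      obtain ⟨x, hx⟩ := Complex.exists_root hdm
      exact ⟨x, by rwa [aeval_def, ← eval_map]⟩
    -- α ≠ 0
    have hαne : α ≠ 0 := by
      intro h0
      subst h0
      have hc0 : f.coeff 0 = 0 := by
        have h2 := hα
        rw [aeval_def, eval₂_at_zero] at h2
        exact (map_eq_zero_iff _ (algebraMap ℚ ℂ).injective).mp h2
      obtain ⟨g, hg⟩ : X ∣ f := X_dvd_iff.mpr hc0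
      rcases hirr.isUnit_or_isUnit hg with hu | hu
      · exact not_isUnit_X hu
      · have hgd : g.natDegree = 0 := natDegree_eq_zero_of_isUnit hu
        have hgne : g ≠ 0 := by rintro rfl; simp at hg; exact hf0 hg
        have : f.natDegree = 1 := by
          rw [hg, natDegree_mul X_ne_zero hgne, natDegree_X, hgd]
        omega
    -- iterates of α under x ↦ x^n are all roots
    have hiter : ∀ k : ℕ, aeval (α ^ n ^ k) f = 0 := by
      intro k
      induction k with
      | zero => simpa using hα
      | succ k ih =>
        have := h _ ih
        rwa [← pow_mul, ← pow_succ] at this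
    -- roots form a finite set
    have hfin : {x : ℂ | aeval x f = 0}.Finite := by
      have : {x : ℂ | aeval x f = 0} ⊆ (f.map (algebraMap ℚ ℂ)).roots.toFinset := by
        intro x hx
        simp only [Finset.mem_coe, Multiset.mem_toFinset, mem_roots', IsRoot.def]
        refine ⟨by simpa using hf0, ?_⟩
        rwa [eval_map, ← aeval_def]
      exact Set.Finite.subset (Finset.finite_toSet _) this
    obtain ⟨j, -, k, -, hjk, heq⟩ :=
      Set.Infinite.exists_ne_map_eq_of_mapsTo (f := fun k => α ^ n ^ k)
        Set.infinite_univ (fun k _ => hiter k) hfin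
    wlog hlt : j < k generalizing j k
    · exact this k j hjk.symm heq.symm (by omega)
    -- α^(n^k - n^j) = 1
    have hmono : n ^ j < n ^ k := Nat.pow_lt_pow_right (by omega) hlt
    have hone : α ^ (n ^ k - n ^ j) = 1 := by
      have : α ^ n ^ j * α ^ (n ^ k - n ^ j) = α ^ n ^ j * 1 := by
        rw [mul_one, ← pow_add]
        rw [Nat.add_sub_cancel' hmono.le]
        exact heq.symm
      exact mul_left_cancel₀ (pow_ne_zero _ hαne) this
    have hfo : IsOfFinOrder α :=
      isOfFinOrder_iff_pow_eq_one.mpr ⟨n ^ k - n ^ j, by omega, hone⟩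
    set d := orderOf α with hd
    have hprim : IsPrimitiveRoot α d := IsPrimitiveRoot.orderOf α
    have hdpos : 0 < d := hfo.orderOf_pos
    -- f = minpoly = cyclotomic d
    have hmin : minpoly ℚ α = f := (minpoly.eq_of_irreducible_of_monic hirr hα hmonic).symm
    have hcyc : f = cyclotomic d ℚ := by
      rw [← hmin, cyclotomic_eq_minpoly_rat hprim hdpos]
    have hdegcyc : n = Nat.totient d := by
      rw [← hdeg, hcyc, natDegree_cyclotomic]
    have hd3 : 3 ≤ d := by
      by_contra hcon
      have h12 : d = 1 ∨ d = 2 := by omega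
      rcases h12 with h1 | h1
      · rw [h1, Nat.totient_one] at hdegcyc; omega
      · rw [h1, Nat.totient_two] at hdegcyc; omega
    -- α^n is a root of cyclotomic d, hence primitive, hence coprime
    have : NeZero (d : ℂ) := ⟨Nat.cast_ne_zero.mpr hdpos.ne'⟩
    have hroot : IsRoot (cyclotomic d ℂ) (α ^ n) := by
      have := h α hα
      rw [hcyc] at this
      rw [IsRoot.def, ← map_cyclotomic d (algebraMap ℚ ℂ), eval_map, ← aeval_def]
      exact this
    have hprimpow : IsPrimitiveRoot (α ^ n) d := (isRoot_cyclotomic_iff).mp hroot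
    have hcop : Nat.Coprime n d := by
      exact (hprim.pow_iff_coprime hdpos n).mp hprimpow
    exact ⟨d, hd3, hcop, hcyc⟩
  · rintro ⟨d, hd3, hcop, rfl⟩
    intro α hα
    have : NeZero (d : ℂ) := ⟨by exact_mod_cast Nat.cast_ne_zero.mpr (by omega)⟩
    have hroot : IsRoot (cyclotomic d ℂ) α := by
      rw [IsRoot.def, ← map_cyclotomic d (algebraMap ℚ ℂ), eval_map, ← aeval_def]
      exact hα
    have hprim : IsPrimitiveRoot α d := (isRoot_cyclotomic_iff).mp hroot
    have hpow : IsPrimitiveRoot (α ^ n) d := hprim.pow_of_coprime n hcop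
    have : IsRoot (cyclotomic d ℂ) (α ^ n) := (isRoot_cyclotomic_iff).mpr hpow
    rwa [IsRoot.def, ← map_cyclotomic d (algebraMap ℚ ℂ), eval_map, ← aeval_def] at this
end
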